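/- Let k ≥ 2. If there exists a quaternary Hermitian LCD [n,k,d₀] code with Hermitian dual distance at least 2, then there exists a quaternary Hermitian LCD [n+1,k,d] code with Hermitian dual distance at least 2 and d ∈ {d₀, d₀+1}. -/

import Mathlib

/-! Since `k ≥ 2`, the code `C` contains a nonzero Hermitian-isotropic codeword `v`: over `𝔽₄`
every nonzero norm `(u, u)_h` equals `1`, so of two orthogonal anisotropic codewords the sum is
isotropic. Extend each codeword `c` by the check symbol `(c, v)_h`. This map is injective and
raises each weight by at most one, so the dimension is kept and the minimum distance becomes `d₀`
or `d₀ + 1`. A vector `(x, a)` is Hermitian-dual to the new code iff `x + a v ∈ C^{⊥h}`. Pairing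
with `v` shows that a codeword `(c, (c, v)_h)` in the new hull has `(c, v)_h = 0`, so `c` is in the
hull of `C`; and a dual vector `(0, a)` with `a ≠ 0` would put `v` in the hull of `C`. -/

open Finset Matrix

/-- The Hermitian inner product `(x, y)_h = ∑ i, x i * (y i)^q` on `F^n`. -/
def hermInner {F : Type*} [Field F] (q : ℕ) {n : ℕ} (x y : Fin n → F) : F :=
  ∑ i, x i * (y i) ^ q

/-- The Hermitian dual code `C^{⊥h}`. -/
def hermDual {F : Type*} [Field F] (q : ℕ) {n : ℕ} (C : Submodule F (Fin n → F)) :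
    Submodule F (Fin n → F) where
  carrier := {x | ∀ y ∈ C, hermInner q x y = 0}
  add_mem' := by
    intro a b ha hb y hy
    have h1 := ha y hy
    have h2 := hb y hy
    simp only [hermInner] at *
    rw [show (∑ i, (a + b) i * y i ^ q)
        = (∑ i, a i * y i ^ q) + ∑ i, b i * y i ^ q by
      rw [← Finset.sum_add_distrib]
      exact Finset.sum_congr rfl fun i _ => by simp [add_mul]]
    rw [h1, h2, add_zero]
  zero_mem' := by
    intro y hy
    simp [hermInner]
  smul_mem' := by
    intro c a ha y hy
    have h1 := ha y hy
    simp only [hermInner] at *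
    rw [show (∑ i, (c • a) i * y i ^ q) = c * ∑ i, a i * y i ^ q by
      rw [Finset.mul_sum]
      exact Finset.sum_congr rfl fun i _ => by simp [mul_assoc]]
    rw [h1, mul_zero]

/-- A code is Hermitian LCD if `C ∩ C^{⊥h} = {0}`. -/
def IsHermLCD {F : Type*} [Field F] (q : ℕ) {n : ℕ} (C : Submodule F (Fin n → F)) : Prop :=
  C ⊓ hermDual q C = ⊥

/-- Hamming weight: number of nonzero coordinates. -/
noncomputable def wt {F : Type*} [Field F] {n : ℕ} (x : Fin n → F) : ℕ :=
  Nat.card {i // x i ≠ 0}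

/-- `C` has minimum weight `d`. -/
def minWt {F : Type*} [Field F] {n : ℕ} (C : Submodule F (Fin n → F)) (d : ℕ) : Prop :=
  (∃ c ∈ C, c ≠ 0 ∧ wt c = d) ∧ ∀ c ∈ C, c ≠ 0 → d ≤ wt c

/-- The Hermitian dual distance of `C` is at least 2. -/
def dualDistGeTwo {F : Type*} [Field F] (q : ℕ) {n : ℕ} (C : Submodule F (Fin n → F)) : Prop :=
  ∀ x ∈ hermDual q C, x ≠ 0 → 2 ≤ wt x

/-- The Hermitian dual distance of `C` equals 1, i.e. `C^{⊥h}` contains a weight-one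
vector. -/
def dualDistOne {F : Type*} [Field F] (q : ℕ) {n : ℕ} (C : Submodule F (Fin n → F)) : Prop :=
  ∃ x ∈ hermDual q C, wt x = 1

/-- Modelled on the Frobenius `x ↦ x ^ q` of `𝔽_{q²}`. -/
structure IsConjugationExponent (F : Type*) [Field F] (q : ℕ) : Prop where
  add_pow : ∀ a b : F, (a + b) ^ q = a ^ q + b ^ q
  pow_pow : ∀ a : F, (a ^ q) ^ q = a

namespace IsConjugationExponent

variable {F : Type*} [Field F] {q : ℕ}

def toRingHom (hF : IsConjugationExponent F q) : F →+* F where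
  toFun a := a ^ q
  map_one' := one_pow q
  map_mul' a b := mul_pow a b q
  map_zero' := by simpa using hF.add_pow 0 0
  map_add' := hF.add_pow

@[simp]
lemma toRingHom_apply (hF : IsConjugationExponent F q) (a : F) : hF.toRingHom a = a ^ q := rfl

end IsConjugationExponent

lemma isConjugationExponent_galoisField_two_two : IsConjugationExponent (GaloisField 2 2) 2 where
  add_pow := CharTwo.add_sq
  pow_pow a := by
    have := Fintype.ofFinite (GaloisField 2 2)
    have hcard : Fintype.card (GaloisField 2 2) = 4 := by
      simpa [Nat.card_eq_fintype_card] using GaloisField.card 2 2 two_ne_zero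
    rw [← pow_mul, show 2 * 2 = Fintype.card (GaloisField 2 2) from hcard.symm,
      FiniteField.pow_card]

section Hermitian

variable {F : Type*} [Field F] {q m : ℕ}

lemma hermInner_add_left (x x' y : Fin m → F) :
    hermInner q (x + x') y = hermInner q x y + hermInner q x' y := by
  simp [hermInner, add_mul, Finset.sum_add_distrib]

lemma hermInner_smul_left (a : F) (x y : Fin m → F) :
    hermInner q (a • x) y = a * hermInner q x y := by
  simp [hermInner, Finset.mul_sum, mul_assoc]

lemma hermInner_swap (hF : IsConjugationExponent F q) (x y : Fin m → F) :
    hermInner q y x = hermInner q x y ^ q := by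
  rw [← hF.toRingHom_apply, hermInner, hermInner, map_sum]
  refine Finset.sum_congr rfl fun i _ => ?_
  rw [map_mul, hF.toRingHom_apply, hF.toRingHom_apply, hF.pow_pow, mul_comm]

lemma hermInner_add_right (hF : IsConjugationExponent F q) (x y y' : Fin m → F) :
    hermInner q x (y + y') = hermInner q x y + hermInner q x y' := by
  rw [← hF.pow_pow (hermInner q x (y + y')), ← hermInner_swap hF, hermInner_add_left, hF.add_pow,
    ← hermInner_swap hF, ← hermInner_swap hF]

def hermInnerRight (q : ℕ) (v : Fin m → F) : (Fin m → F) →ₗ[F] F where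
  toFun x := hermInner q x v
  map_add' x x' := hermInner_add_left x x' v
  map_smul' a x := hermInner_smul_left a x v

@[simp]
lemma hermInnerRight_apply (v x : Fin m → F) : hermInnerRight q v x = hermInner q x v := rfl

lemma exists_ne_zero_hermInner_eq_zero {C : Submodule F (Fin m → F)}
    (hC : 2 ≤ Module.finrank F C) (v : Fin m → F) :
    ∃ w ∈ C, w ≠ 0 ∧ hermInner q w v = 0 := by
  have hker : LinearMap.ker ((hermInnerRight q v).domRestrict C) ≠ ⊥ :=
    LinearMap.ker_ne_bot_of_finrank_lt (by rw [Module.finrank_self]; omega)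
  obtain ⟨w, hw, hw0⟩ := Submodule.exists_mem_ne_zero_of_ne_bot hker
  exact ⟨w, w.2, by simpa using hw0, hw⟩

lemma IsHermLCD.eq_zero {C : Submodule F (Fin m → F)} (hC : IsHermLCD q C) {c : Fin m → F}
    (hc : c ∈ C) (hc' : c ∈ hermDual q C) : c = 0 :=
  (Submodule.eq_bot_iff _).mp hC c ⟨hc, hc'⟩

end Hermitian

section Quaternary

local notation "𝔽₄" => GaloisField 2 2

variable {m : ℕ}

lemma hermInner_self_eq_one {v : Fin m → 𝔽₄} (hv : hermInner 2 v v ≠ 0) :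
    hermInner 2 v v = 1 := by
  have hfix : hermInner 2 v v ^ 2 = hermInner 2 v v :=
    (hermInner_swap isConjugationExponent_galoisField_two_two v v).symm
  have hprod : hermInner 2 v v * (hermInner 2 v v - 1) = 0 := by linear_combination hfix
  exact sub_eq_zero.mp ((mul_eq_zero.mp hprod).resolve_left hv)

lemma exists_isotropic_of_two_le_finrank {C : Submodule 𝔽₄ (Fin m → 𝔽₄)}
    (hC : 2 ≤ Module.finrank 𝔽₄ C) : ∃ v ∈ C, v ≠ 0 ∧ hermInner 2 v v = 0 := by
  have hF := isConjugationExponent_galoisField_two_two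
  obtain ⟨u, huC, hu0⟩ :=
    Submodule.exists_mem_ne_zero_of_ne_bot <|
      Submodule.one_le_finrank_iff.mp (show 1 ≤ Module.finrank 𝔽₄ C by omega)
  by_cases huu : hermInner 2 u u = 0
  · exact ⟨u, huC, hu0, huu⟩
  obtain ⟨w, hwC, hw0, hwu⟩ := exists_ne_zero_hermInner_eq_zero (q := 2) hC u
  by_cases hww : hermInner 2 w w = 0
  · exact ⟨w, hwC, hw0, hww⟩
  have huw : hermInner 2 u w = 0 := by rw [hermInner_swap hF, hwu, zero_pow two_ne_zero]
  refine ⟨u + w, C.add_mem huC hwC, fun h => huu ?_, ?_⟩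
  · rw [eq_neg_of_add_eq_zero_right h, ← neg_one_smul 𝔽₄, hermInner_smul_left] at hwu
    simpa using hwu
  · rw [hermInner_add_left, hermInner_add_right hF, hermInner_add_right hF, huw, hwu,
      hermInner_self_eq_one huu, hermInner_self_eq_one hww, zero_add, add_zero]
    exact CharTwo.add_self_eq_zero 1

end Quaternary

section Extension

variable {F : Type*} [Field F] {m : ℕ}

lemma wt_snoc_zero (x : Fin m → F) : wt (Fin.snoc x 0 : Fin (m + 1) → F) = wt x := by
  classical
  simp [wt, Nat.card_eq_fintype_card, Fintype.card_subtype, Finset.card_filter,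
    Fin.sum_univ_castSucc]

lemma wt_snoc_of_ne_zero (x : Fin m → F) {a : F} (ha : a ≠ 0) :
    wt (Fin.snoc x a : Fin (m + 1) → F) = wt x + 1 := by
  classical
  simp [wt, Nat.card_eq_fintype_card, Fintype.card_subtype, Finset.card_filter,
    Fin.sum_univ_castSucc, ha]

lemma wt_pos {x : Fin m → F} (hx : x ≠ 0) : 0 < wt x := by
  obtain ⟨i, hi⟩ := Function.ne_iff.mp hx
  exact Nat.card_pos_iff.mpr ⟨⟨⟨i, hi⟩⟩, inferInstance⟩

def snocMap (f : (Fin m → F) →ₗ[F] F) : (Fin m → F) →ₗ[F] (Fin (m + 1) → F) where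
  toFun c := Fin.snoc c (f c)
  map_add' c c' := by
    ext i
    refine Fin.lastCases ?_ (fun j => ?_) i <;> simp
  map_smul' a c := by
    ext i
    refine Fin.lastCases ?_ (fun j => ?_) i <;> simp

@[simp]
lemma snocMap_apply (f : (Fin m → F) →ₗ[F] F) (c : Fin m → F) :
    snocMap f c = Fin.snoc c (f c) := rfl

lemma snocMap_injective (f : (Fin m → F) →ₗ[F] F) : Function.Injective (snocMap f) :=
  fun c c' h => by simpa using congrArg Fin.init h

lemma minWt_map_iff {m' : ℕ} {C : Submodule F (Fin m → F)} {T : (Fin m → F) →ₗ[F] (Fin m' → F)}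
    (hT : Function.Injective T) {d : ℕ} :
    minWt (C.map T) d ↔
      (∃ c ∈ C, c ≠ 0 ∧ wt (T c) = d) ∧ ∀ c ∈ C, c ≠ 0 → d ≤ wt (T c) := by
  have hT0 {c : Fin m → F} : T c ≠ 0 ↔ c ≠ 0 := map_ne_zero_iff T hT
  constructor
  · rintro ⟨⟨_, ⟨c, hc, rfl⟩, hc0, hwt⟩, hmin⟩
    exact ⟨⟨c, hc, hT0.mp hc0, hwt⟩, fun c hc hc0 => hmin _ ⟨c, hc, rfl⟩ (hT0.mpr hc0)⟩
  · rintro ⟨⟨c, hc, hc0, hwt⟩, hmin⟩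
    refine ⟨⟨T c, ⟨c, hc, rfl⟩, hT0.mpr hc0, hwt⟩, ?_⟩
    rintro _ ⟨c, hc, rfl⟩ hc0
    exact hmin c hc (hT0.mp hc0)

lemma exists_minWt_map_snocMap {C : Submodule F (Fin m → F)} {d₀ : ℕ} (hC : minWt C d₀)
    (f : (Fin m → F) →ₗ[F] F) :
    ∃ d, minWt (C.map (snocMap f)) d ∧ (d = d₀ ∨ d = d₀ + 1) := by
  obtain ⟨⟨c₀, hc₀C, hc₀, hwt₀⟩, hmin⟩ := hC
  simp only [minWt_map_iff (snocMap_injective f), snocMap_apply]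
  have hwt_le : ∀ c, wt c ≤ wt (Fin.snoc c (f c) : Fin (m + 1) → F) := fun c => by
    by_cases h : f c = 0
    · rw [h, wt_snoc_zero]
    · rw [wt_snoc_of_ne_zero _ h]; omega
  by_cases hex : ∃ c ∈ C, c ≠ 0 ∧ wt c = d₀ ∧ f c = 0
  · obtain ⟨c, hcC, hc, hwt, hfc⟩ := hex
    exact ⟨d₀, ⟨⟨c, hcC, hc, by rw [hfc, wt_snoc_zero, hwt]⟩,
      fun c' hc'C hc' => (hmin c' hc'C hc').trans (hwt_le c')⟩, Or.inl rfl⟩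
  · push Not at hex
    refine ⟨d₀ + 1, ⟨⟨c₀, hc₀C, hc₀, ?_⟩, fun c hcC hc => ?_⟩, Or.inr rfl⟩
    · rw [wt_snoc_of_ne_zero _ (hex c₀ hc₀C hc₀ hwt₀), hwt₀]
    · rcases (hmin c hcC hc).eq_or_lt with h | h
      · rw [wt_snoc_of_ne_zero _ (hex c hcC hc h.symm), h]
      · exact h.trans_le (hwt_le c)

end Extension

section HermitianExtension

variable {F : Type*} [Field F] {q m : ℕ}

lemma hermInner_snoc_snocMap (hF : IsConjugationExponent F q) (v x c : Fin m → F) (a : F) :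
    hermInner q (Fin.snoc x a) (snocMap (hermInnerRight q v) c) = hermInner q (x + a • v) c := by
  rw [snocMap_apply, hermInner, Fin.sum_univ_castSucc]
  simp only [Fin.snoc_castSucc, Fin.snoc_last, hermInnerRight_apply]
  rw [← hermInner, ← hermInner_swap hF, hermInner_add_left, hermInner_smul_left]

lemma snoc_mem_hermDual_map_snocMap_iff (hF : IsConjugationExponent F q)
    {C : Submodule F (Fin m → F)} (v x : Fin m → F) (a : F) :
    Fin.snoc x a ∈ hermDual q (C.map (snocMap (hermInnerRight q v))) ↔
      x + a • v ∈ hermDual q C := by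
  change (∀ y ∈ C.map _, _) ↔ ∀ y ∈ C, _
  simp only [Submodule.mem_map, forall_exists_index, and_imp, forall_apply_eq_imp_iff₂,
    hermInner_snoc_snocMap hF]

lemma isHermLCD_map_snocMap (hF : IsConjugationExponent F q) {C : Submodule F (Fin m → F)}
    (hC : IsHermLCD q C) {v : Fin m → F} (hv : v ∈ C) (hvv : hermInner q v v = 0) :
    IsHermLCD q (C.map (snocMap (hermInnerRight q v))) := by
  rw [IsHermLCD, Submodule.eq_bot_iff]
  intro y hy
  obtain ⟨hyC, hdual⟩ := Submodule.mem_inf.mp hy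
  obtain ⟨c, hc, rfl⟩ := Submodule.mem_map.mp hyC
  rw [snocMap_apply, snoc_mem_hermDual_map_snocMap_iff hF] at hdual
  have hcv : hermInner q c v = 0 := by
    simpa [hermInner_add_left, hermInner_smul_left, hvv] using hdual v hv
  rw [hermInnerRight_apply, hcv, zero_smul, add_zero] at hdual
  rw [hC.eq_zero hc hdual, map_zero]

lemma dualDistGeTwo_map_snocMap (hF : IsConjugationExponent F q) {C : Submodule F (Fin m → F)}
    (hC : IsHermLCD q C) (hd : dualDistGeTwo q C) {v : Fin m → F} (hv : v ∈ C) (hv0 : v ≠ 0) :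
    dualDistGeTwo q (C.map (snocMap (hermInnerRight q v))) := by
  intro y hy hy0
  obtain ⟨x, a, rfl⟩ : ∃ x a, y = Fin.snoc x a :=
    ⟨Fin.init y, y (Fin.last m), (Fin.snoc_init_self y).symm⟩
  rw [snoc_mem_hermDual_map_snocMap_iff hF] at hy
  by_cases ha : a = 0
  · subst ha
    rw [zero_smul, add_zero] at hy
    rw [wt_snoc_zero]
    exact hd x hy fun hx => hy0 (by rw [hx]; exact Fin.snoc_init_self 0)
  · have hx : x ≠ 0 := by
      rintro rfl
      rw [zero_add] at hy
      refine hv0 (hC.eq_zero hv ?_)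
      simpa [smul_smul, inv_mul_cancel₀ ha] using (hermDual q C).smul_mem a⁻¹ hy
    rw [wt_snoc_of_ne_zero _ ha]
    have := wt_pos hx
    omega

end HermitianExtension

/-- quaternary codes, i.e. codes over `GaloisField 2 2`, with conjugation
`x ↦ x ^ 2`. -/
theorem stmt_3 (n k d₀ : ℕ) (hk : 2 ≤ k)
    (h : ∃ C : Submodule (GaloisField 2 2) (Fin n → GaloisField 2 2),
      Module.finrank (GaloisField 2 2) C = k ∧ IsHermLCD 2 C ∧ minWt C d₀ ∧
      dualDistGeTwo 2 C) :
    ∃ C : Submodule (GaloisField 2 2) (Fin (n + 1) → GaloisField 2 2), ∃ d : ℕ,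
      Module.finrank (GaloisField 2 2) C = k ∧ IsHermLCD 2 C ∧ minWt C d ∧
      dualDistGeTwo 2 C ∧ (d = d₀ ∨ d = d₀ + 1) := by
  obtain ⟨C, hrank, hLCD, hmin, hdd⟩ := h
  have hF := isConjugationExponent_galoisField_two_two
  obtain ⟨v, hvC, hv0, hvv⟩ := exists_isotropic_of_two_le_finrank (hrank ▸ hk)
  let T := snocMap (hermInnerRight 2 v)
  obtain ⟨d, hmin', hd⟩ := exists_minWt_map_snocMap hmin (hermInnerRight 2 v)
  refine ⟨C.map T, d, ?_, isHermLCD_map_snocMap hF hLCD hvC hvv, hmin',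
    dualDistGeTwo_map_snocMap hF hLCD hdd hvC hv0, hd⟩
  rw [← hrank]
  exact (Submodule.equivMapOfInjective T (snocMap_injective _) C).finrank_eq.symm
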